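/- Let G be a graph with vertices a₁, a₂ at distance at most r/2. Let o be a closed walk of length at most r in G containing both a₁ and a₂, and let x be a vertex on o. Then every shortest path in G from x to the core (the set of vertices on shortest a₁–a₂ paths) is entirely contained in the ball B_{r/2}(a₁) and in the ball B_{r/2}(a₂). -/

import Mathlib

open SimpleGraph

universe u

namespace LocalSep

variable {V : Type u}

/-- The ball of radius `r/2` around `v`: vertices of distance at most `⌊r/2⌋` from `v`;
if `r` is even, edges joining two vertices of distance exactly `r/2` are removed. -/
def ballVerts (G : SimpleGraph V) (v : V) (r : ℕ) : Set V :=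
  {u | G.Reachable v u ∧ G.dist v u ≤ r / 2}

def ball (G : SimpleGraph V) (v : V) (r : ℕ) : G.Subgraph where
  verts := ballVerts G v r
  Adj u u' := G.Adj u u' ∧ u ∈ ballVerts G v r ∧ u' ∈ ballVerts G v r ∧
    (Even r → ¬(G.dist v u = r / 2 ∧ G.dist v u' = r / 2))
  adj_sub h := h.1
  edge_vert h := h.2.1
  symm := ⟨fun u u' h => ⟨h.1.symm, h.2.2.1, h.2.1, fun he hc => h.2.2.2 he ⟨hc.2, hc.1⟩⟩⟩

/-- `v` is an `r`-local cutvertex if the punctured ball `B_{r/2}(v) - v` is disconnected. -/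
def IsLocalCutvertex (G : SimpleGraph V) (r : ℕ) (v : V) : Prop :=
  ¬ ((ball G v r).deleteVerts {v}).coe.Connected

def HasShortCycle (G : SimpleGraph V) (r : ℕ) : Prop :=
  ∃ (u : V) (c : G.Walk u u), c.IsCycle ∧ c.length ≤ r

/-- A connected graph is `r`-locally 2-connected if it has no `r`-local cutvertex
and contains a cycle of length at most `r`. -/
def LocallyTwoConnected (G : SimpleGraph V) (r : ℕ) : Prop :=
  G.Connected ∧ (∀ v : V, ¬ IsLocalCutvertex G r v) ∧ HasShortCycle G r

/-- The core of `(a₁, a₂)`: all vertices on shortest `a₁`–`a₂` paths. -/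
def core (G : SimpleGraph V) (a₁ a₂ : V) : Set V :=
  {x | ∃ p : G.Walk a₁ a₂, p.IsPath ∧ p.length = G.dist a₁ a₂ ∧ x ∈ p.support}

/-- A walk is contained in a subgraph. -/
def WalkIn {G : SimpleGraph V} (B : G.Subgraph) {x y : V} (p : G.Walk x y) : Prop :=
  p.toSubgraph ≤ B

/-- The label of a vertex `u` in a ball `B`: the set of (supports of) shortest paths
from the core `C` to `u` contained in `B`. -/
def labelIn (G : SimpleGraph V) (B : G.Subgraph) (C : Set V) (u : V) : Set (List V) :=
  {l | ∃ c ∈ C, ∃ p : G.Walk c u, p.IsPath ∧ WalkIn B p ∧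
    (∀ c' ∈ C, ∀ q : G.Walk c' u, q.IsPath → WalkIn B q → p.length ≤ q.length) ∧
    l = p.support}

/-- A potential vertex of the explorer-neighbourhood: a vertex together with a label. -/
abbrev EVert (V : Type u) : Type u := V × Set (List V)

/-- `p` is the copy of the vertex `p.1` in the labelled ball around `a ∈ {a₁, a₂}`. -/
def inCopy (G : SimpleGraph V) (a₁ a₂ : V) (r : ℕ) (a : V) (p : EVert V) : Prop :=
  p.1 ∈ ballVerts G a r ∧ p.2 = labelIn G (ball G a r) (core G a₁ a₂) p.1

/-- Vertices of the explorer-neighbourhood `Expl(a₁,a₂)`. -/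
def explVerts (G : SimpleGraph V) (a₁ a₂ : V) (r : ℕ) : Set (EVert V) :=
  {p | inCopy G a₁ a₂ r a₁ p ∨ inCopy G a₁ a₂ r a₂ p}

/-- The explorer-neighbourhood `Expl(a₁,a₂)`: the union of the two labelled balls,
where two copies of a vertex are identified iff their labels agree. -/
def expl (G : SimpleGraph V) (a₁ a₂ : V) (r : ℕ) : SimpleGraph (EVert V) where
  Adj p q :=
    (inCopy G a₁ a₂ r a₁ p ∧ inCopy G a₁ a₂ r a₁ q ∧ (ball G a₁ r).Adj p.1 q.1) ∨
    (inCopy G a₁ a₂ r a₂ p ∧ inCopy G a₁ a₂ r a₂ q ∧ (ball G a₂ r).Adj p.1 q.1)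
  symm := by
    refine ⟨?_⟩
    intro p q h
    rcases h with ⟨h1, h2, h3⟩ | ⟨h1, h2, h3⟩
    · exact Or.inl ⟨h2, h1, h3.symm⟩
    · exact Or.inr ⟨h2, h1, h3.symm⟩
  loopless := by
    refine ⟨?_⟩
    intro p h
    rcases h with ⟨-, -, h⟩ | ⟨-, -, h⟩ <;> exact G.irrefl h.adj_sub

/-- Vertices of the punctured explorer-neighbourhood `Expl(a₁,a₂) - a₁ - a₂`. -/
def pexplVerts (G : SimpleGraph V) (a₁ a₂ : V) (r : ℕ) : Set (EVert V) :=
  {p | p ∈ explVerts G a₁ a₂ r ∧ p.1 ≠ a₁ ∧ p.1 ≠ a₂}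

/-- The punctured explorer-neighbourhood `Expl(a₁,a₂) - a₁ - a₂`. -/
def pexpl (G : SimpleGraph V) (a₁ a₂ : V) (r : ℕ) :
    SimpleGraph (pexplVerts G a₁ a₂ r) :=
  SimpleGraph.induce (pexplVerts G a₁ a₂ r) (expl G a₁ a₂ r)

/-- `{v,w}` is an `r`-local 2-separator: `v,w` have distance at most `r/2` and the
punctured explorer-neighbourhood is disconnected. -/
def IsLocalTwoSep (G : SimpleGraph V) (r : ℕ) (v w : V) : Prop :=
  v ≠ w ∧ G.Reachable v w ∧ 2 * G.dist v w ≤ r ∧ ¬ (pexpl G v w r).Connected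

/-- The pair `(p,q)` of vertices of `Expl(b₁,b₂)` crosses the local 2-separator `{b₁,b₂}`:
they lie in different components of the punctured explorer-neighbourhood and there is a cycle
of length at most `r` through them containing a copy of `b₁` or `b₂`. -/
def CrossesPair (G : SimpleGraph V) (r : ℕ) (b₁ b₂ : V) (p q : EVert V) : Prop :=
  ∃ (hp : p ∈ pexplVerts G b₁ b₂ r) (hq : q ∈ pexplVerts G b₁ b₂ r),
    ¬ (pexpl G b₁ b₂ r).Reachable ⟨p, hp⟩ ⟨q, hq⟩ ∧
    ∃ (u : EVert V) (c : (expl G b₁ b₂ r).Walk u u), c.IsCycle ∧ c.length ≤ r ∧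
      p ∈ c.support ∧ q ∈ c.support ∧ ∃ z ∈ c.support, z.1 = b₁ ∨ z.1 = b₂

/-- `{a₁,a₂}` crosses `{b₁,b₂}`: some copies of `a₁`, `a₂` cross `{b₁,b₂}`. -/
def Crosses (G : SimpleGraph V) (r : ℕ) (a₁ a₂ b₁ b₂ : V) : Prop :=
  ∃ p q : EVert V, p.1 = a₁ ∧ q.1 = a₂ ∧ CrossesPair G r b₁ b₂ p q

/-- Some copy of `x` lies in the same component of `Expl(v,w) - v - w` as some copy of `y`. -/
def CopyReach (G : SimpleGraph V) (r : ℕ) (v w x y : V) : Prop :=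
  ∃ (p q : EVert V) (hp : p ∈ pexplVerts G v w r) (hq : q ∈ pexplVerts G v w r),
    p.1 = x ∧ q.1 = y ∧ (pexpl G v w r).Reachable ⟨p, hp⟩ ⟨q, hq⟩

/-- A cycle through `a₁` alternating between `{a₁,a₂}` and `{b₁,b₂}`: the four vertices are
distinct and `b₁`, `b₂` lie on different arcs of the cycle between `a₁` and `a₂`. -/
def AltCycle (G : SimpleGraph V) (a₁ a₂ b₁ b₂ : V) (c : G.Walk a₁ a₁) : Prop :=
  c.IsCycle ∧ b₁ ≠ b₂ ∧ b₁ ∉ ({a₁, a₂} : Set V) ∧ b₂ ∉ ({a₁, a₂} : Set V) ∧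
  ∃ (p : G.Walk a₁ a₂) (q : G.Walk a₂ a₁), c = p.append q ∧
    ((b₁ ∈ p.support ∧ b₂ ∈ q.support) ∨ (b₂ ∈ p.support ∧ b₁ ∈ q.support))

/-- `S` is generated over `𝔽₂` by members of `C` (sum = symmetric difference). -/
def GeneratedBy {α : Type*} (C : Set (Set (Sym2 α))) (S : Set (Sym2 α)) : Prop :=
  ∃ l : List (Set (Sym2 α)), (∀ A ∈ l, A ∈ C) ∧ l.foldr symmDiff ∅ = S

/-- The edge set of a walk. -/
def walkEdgeSet {α : Type*} {H : SimpleGraph α} {x y : α} (c : H.Walk x y) : Set (Sym2 α) :=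
  {e | e ∈ c.edges}

end LocalSep

/-! Let `p` have length `L`. Since `a₁` and `a₂` lie in the core themselves, `L ≤ d(x, aᵢ)`,
and the closed walk `o` through `x, a₁, a₂` gives `d(x, a₁) + d(a₁, a₂) + d(a₂, x) ≤ r`.
The vertex at position `i` of `p` is within `d(a₁, x) + i` and within `d(a₁, c) + (L - i)`
of `a₁`, where `d(a₁, c) ≤ d(a₁, a₂)` because `c` is on a shortest `a₁`–`a₂` path. Adding the
two bounds shows twice its distance to `a₁` is at most `r`; for the two ends of an edge of `p`
the same sum is at most `r - 1`, so they are not both at distance exactly `r/2`. -/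

namespace SimpleGraph.Walk

variable {V : Type u} {G : SimpleGraph V}

lemma dist_add_dist_le_length {u v w : V} (p : G.Walk u w) (hv : v ∈ p.support) :
    G.dist u v + G.dist v w ≤ p.length := by
  classical
  calc G.dist u v + G.dist v w ≤ (p.takeUntil v hv).length + (p.dropUntil v hv).length :=
        add_le_add (dist_le _) (dist_le _)
    _ = p.length := by rw [← length_append, take_spec]

lemma dist_add_dist_add_dist_le_length {u x y z : V} (o : G.Walk u u) (hx : x ∈ o.support)
    (hy : y ∈ o.support) (hz : z ∈ o.support) :
    G.dist x y + G.dist y z + G.dist z x ≤ o.length := by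
  classical
  rw [← length_rotate o x hx]
  rw [← mem_support_rotate_iff o x hx] at hy hz
  generalize o.rotate x hx = o' at hy hz ⊢
  rw [← o'.take_spec hy, mem_support_append_iff] at hz
  rw [← o'.take_spec hy, length_append]
  rcases hz with hz | hz
  · have h₁ := (o'.takeUntil y hy).dist_add_dist_le_length hz
    have h₂ := dist_le (o'.dropUntil y hy)
    simp only [dist_comm] at h₁ h₂ ⊢
    omega
  · have h₁ := dist_le (o'.takeUntil y hy)
    have h₂ := (o'.dropUntil y hy).dist_add_dist_le_length hz
    simp only [dist_comm] at h₁ h₂ ⊢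
    omega

lemma dist_getVert_add_dist_getVert_le {a x c : V} (p : G.Walk x c) (ha : G.Reachable a x)
    {i j : ℕ} (hij : i ≤ j) (hj : j ≤ p.length) :
    G.dist a (p.getVert i) + G.dist a (p.getVert j) + (j - i) ≤
      G.dist a x + G.dist a c + p.length := by
  have hi_le : G.dist a (p.getVert i) ≤ G.dist a x + i :=
    calc G.dist a (p.getVert i) ≤ G.dist a x + G.dist x (p.getVert i) :=
          ha.dist_triangle_left _
      _ ≤ G.dist a x + i := by
          gcongr
          exact (dist_le (p.take i)).trans (by simp)
  have hj_le : G.dist a (p.getVert j) ≤ G.dist a c + (p.length - j) :=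
    calc G.dist a (p.getVert j) ≤ G.dist a c + G.dist c (p.getVert j) :=
          (ha.trans ⟨p⟩).dist_triangle_left _
      _ ≤ G.dist a c + (p.length - j) := by
          gcongr
          exact dist_comm.trans_le ((dist_le (p.drop j)).trans_eq (drop_length p j))
  omega

end SimpleGraph.Walk

namespace LocalSep

variable {V : Type u} {G : SimpleGraph V}

lemma toSubgraph_le_ball {a x c : V} {r : ℕ} (p : G.Walk x c) (ha : G.Reachable a x)
    (h : G.dist a x + G.dist a c + p.length ≤ r) : p.toSubgraph ≤ ball G a r := by
  have hvert : ∀ i ≤ p.length, p.getVert i ∈ ballVerts G a r := fun i hi =>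
    have := p.dist_getVert_add_dist_getVert_le ha le_rfl hi
    ⟨ha.trans ⟨p.take i⟩, by omega⟩
  refine ⟨fun y hy => ?_, fun y z hyz => ?_⟩
  · obtain ⟨i, rfl, hi⟩ := Walk.mem_support_iff_exists_getVert.mp (p.mem_verts_toSubgraph.mp hy)
    exact hvert i hi
  · obtain ⟨i, hyz', hi⟩ := (p.toSubgraph_adj_iff).mp hyz
    have := p.dist_getVert_add_dist_getVert_le ha (Nat.le_add_right i 1) hi
    refine ⟨p.toSubgraph.adj_sub hyz, ?_⟩
    rcases Sym2.eq_iff.mp hyz' with ⟨rfl, rfl⟩ | ⟨rfl, rfl⟩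
    · exact ⟨hvert i hi.le, hvert (i + 1) hi, fun ⟨m, hm⟩ => by omega⟩
    · exact ⟨hvert (i + 1) hi, hvert i hi.le, fun ⟨m, hm⟩ => by omega⟩

theorem stmt5_general {V : Type u} (G : SimpleGraph V) (a₁ a₂ : V) (r : ℕ)
    {u : V} (o : G.Walk u u) (ho : o.length ≤ r)
    (ha₁ : a₁ ∈ o.support) (ha₂ : a₂ ∈ o.support)
    {x : V} (hx : x ∈ o.support)
    {c : V} (hc : c ∈ core G a₁ a₂) (p : G.Walk x c)
    (hmin : ∀ c' ∈ core G a₁ a₂, ∀ q : G.Walk x c', q.IsPath → p.length ≤ q.length) :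
    p.toSubgraph ≤ ball G a₁ r ∧ p.toSubgraph ≤ ball G a₂ r := by
  classical
  obtain ⟨p₀, hp₀, hp₀len, hc₀⟩ := hc
  have hc_between : G.dist a₁ c + G.dist c a₂ ≤ G.dist a₁ a₂ :=
    hp₀len ▸ p₀.dist_add_dist_le_length hc₀
  have hreach₁ : G.Reachable a₁ x := ⟨(p₀.takeUntil c hc₀).append p.reverse⟩
  have hreach₂ : G.Reachable a₂ x := ⟨(p₀.dropUntil c hc₀).reverse.append p.reverse⟩
  have hp_le : ∀ a ∈ core G a₁ a₂, G.Reachable a x → p.length ≤ G.dist a x := by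
    intro a ha hax
    obtain ⟨q, hq, hqlen⟩ := hax.symm.exists_path_of_dist
    rw [SimpleGraph.dist_comm, ← hqlen]
    exact hmin a ha q hq
  have hlen₁ := hp_le a₁ ⟨p₀, hp₀, hp₀len, p₀.start_mem_support⟩ hreach₁
  have hlen₂ := hp_le a₂ ⟨p₀, hp₀, hp₀len, p₀.end_mem_support⟩ hreach₂
  have hperim := (o.dist_add_dist_add_dist_le_length hx ha₁ ha₂).trans ho
  rw [SimpleGraph.dist_comm (u := x)] at hperim
  rw [SimpleGraph.dist_comm (u := c)] at hc_between
  exact ⟨toSubgraph_le_ball p hreach₁ (by omega), toSubgraph_le_ball p hreach₂ (by omega)⟩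

/-- Let `a₁, a₂` be at distance at most `r/2`, let `o` be a closed walk of length at most `r`
through `a₁` and `a₂`, and let `x` be a vertex on `o`. Then every shortest path from `x` to
the core of `(a₁,a₂)` is entirely contained in `B_{r/2}(a₁)` and in `B_{r/2}(a₂)`. -/
theorem stmt5 {V : Type u} (G : SimpleGraph V) (a₁ a₂ : V) (r : ℕ)
    (hreach : G.Reachable a₁ a₂) (hdist : 2 * G.dist a₁ a₂ ≤ r)
    {u : V} (o : G.Walk u u) (ho : o.length ≤ r)
    (ha₁ : a₁ ∈ o.support) (ha₂ : a₂ ∈ o.support)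
    {x : V} (hx : x ∈ o.support)
    {c : V} (hc : c ∈ core G a₁ a₂) (p : G.Walk x c) (hp : p.IsPath)
    (hmin : ∀ c' ∈ core G a₁ a₂, ∀ q : G.Walk x c', q.IsPath → p.length ≤ q.length) :
    p.toSubgraph ≤ ball G a₁ r ∧ p.toSubgraph ≤ ball G a₂ r :=
  stmt5_general G a₁ a₂ r o ho ha₁ ha₂ hx hc p hmin

end LocalSep
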